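/- There is a universal constant bound: if A is a unital Banach algebra, x ∈ A is accretive with ‖x‖ ≤ 1, and 0 < α < 1, then ‖x^α‖ ≤ (2 sin(απ))/(π α (1−α)). In particular ‖x^{1/m}‖ ≤ 2m/(m−1) for m ≥ 2. -/

import Mathlib

/-!
For `t > 0` and `b ≠ 0`, the state `ψ y = φ (y * b) / ‖b‖` built from a norming functional `φ`
of `b` gives `t ‖b‖ ≤ Re ψ (t + x) ‖b‖ ≤ ‖(t + x) b‖` for accretive `x`, so `‖(t + x)⁻¹‖ ≤ 1 / t`;
invertibility of `t + x` itself follows by perturbing the unit `(t + ‖x‖) + x`. Since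
`(t + x)⁻¹ x = 1 - t (t + x)⁻¹`, the Balakrishnan integrand is bounded by `2 t^(α-1)` on `(0, 1]`
and by `‖x‖ t^(α-2)` on `(1, ∞)`, whose integrals give `2/α + ‖x‖/(1-α) ≤ 2/(α(1-α))`.
The case `α = 1/m` then uses `sin (π/m) ≤ π/m`.
-/

open MeasureTheory

/-- The fractional power of `x` given by the Balakrishnan representation
`x^α = (sin(απ)/π) ∫₀^∞ t^{α−1} (t+x)⁻¹ x dt`. -/
noncomputable def balPow {A : Type*} [NormedRing A] [NormedSpace ℝ A]
    (x : A) (α : ℝ) : A :=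
  (Real.sin (α * Real.pi) / Real.pi) •
    ∫ t in Set.Ioi (0 : ℝ), t ^ (α - 1) • (Ring.inverse (t • (1 : A) + x) * x)

open Set

section RpowMajorant

variable {E : Type*} [NormedAddCommGroup E] {f : ℝ → E} {C β : ℝ}

theorem integrableOn_Ioc_zero_one_of_norm_le_rpow
    (hf : AEStronglyMeasurable f (volume.restrict (Ioc 0 1))) (hβ : -1 < β)
    (hbound : ∀ t ∈ Ioc (0 : ℝ) 1, ‖f t‖ ≤ C * t ^ β) : IntegrableOn f (Ioc 0 1) := by
  have hg : IntegrableOn (fun t : ℝ => C * t ^ β) (Ioc 0 1) :=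
    ((intervalIntegral.intervalIntegrable_rpow' hβ).const_mul C).1
  exact hg.mono' hf ((ae_restrict_iff' measurableSet_Ioc).2 (.of_forall hbound))

theorem norm_setIntegral_Ioc_zero_one_le_of_norm_le_rpow [NormedSpace ℝ E] (hβ : -1 < β)
    (hbound : ∀ t ∈ Ioc (0 : ℝ) 1, ‖f t‖ ≤ C * t ^ β) :
    ‖∫ t in Ioc (0 : ℝ) 1, f t‖ ≤ C / (β + 1) := by
  have hg : IntegrableOn (fun t : ℝ => C * t ^ β) (Ioc 0 1) :=
    ((intervalIntegral.intervalIntegrable_rpow' hβ).const_mul C).1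
  calc ‖∫ t in Ioc (0 : ℝ) 1, f t‖ ≤ ∫ t in Ioc (0 : ℝ) 1, C * t ^ β :=
        norm_integral_le_of_norm_le hg ((ae_restrict_iff' measurableSet_Ioc).2 (.of_forall hbound))
    _ = C / (β + 1) := by
        rw [← intervalIntegral.integral_of_le zero_le_one, intervalIntegral.integral_const_mul,
          integral_rpow (.inl hβ), Real.one_rpow, Real.zero_rpow (by linarith)]
        ring

theorem integrableOn_Ioi_one_of_norm_le_rpow
    (hf : AEStronglyMeasurable f (volume.restrict (Ioi 1))) (hβ : β < -1)
    (hbound : ∀ t ∈ Ioi (1 : ℝ), ‖f t‖ ≤ C * t ^ β) : IntegrableOn f (Ioi 1) :=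
  ((integrableOn_Ioi_rpow_of_lt hβ one_pos).const_mul C).mono' hf
    ((ae_restrict_iff' measurableSet_Ioi).2 (.of_forall hbound))

theorem norm_setIntegral_Ioi_one_le_of_norm_le_rpow [NormedSpace ℝ E] (hβ : β < -1)
    (hbound : ∀ t ∈ Ioi (1 : ℝ), ‖f t‖ ≤ C * t ^ β) :
    ‖∫ t in Ioi (1 : ℝ), f t‖ ≤ C / (-β - 1) := by
  calc ‖∫ t in Ioi (1 : ℝ), f t‖ ≤ ∫ t in Ioi (1 : ℝ), C * t ^ β :=
        norm_integral_le_of_norm_le ((integrableOn_Ioi_rpow_of_lt hβ one_pos).const_mul C)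
          ((ae_restrict_iff' measurableSet_Ioi).2 (.of_forall hbound))
    _ = C / (-β - 1) := by
        rw [integral_const_mul, integral_Ioi_rpow_of_lt hβ one_pos, Real.one_rpow,
          show -β - 1 = -(β + 1) by ring, div_neg]
        ring

theorem norm_setIntegral_Ioi_zero_le_of_norm_le_rpow [NormedSpace ℝ E]
    (hf : AEStronglyMeasurable f (volume.restrict (Ioi 0))) {D γ : ℝ} (hβ : -1 < β) (hγ : γ < -1)
    (hbound₀ : ∀ t ∈ Ioc (0 : ℝ) 1, ‖f t‖ ≤ C * t ^ β)
    (hbound₁ : ∀ t ∈ Ioi (1 : ℝ), ‖f t‖ ≤ D * t ^ γ) :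
    ‖∫ t in Ioi (0 : ℝ), f t‖ ≤ C / (β + 1) + D / (-γ - 1) := by
  rw [← Ioc_union_Ioi_eq_Ioi zero_le_one, setIntegral_union Ioc_disjoint_Ioi_same measurableSet_Ioi
    (integrableOn_Ioc_zero_one_of_norm_le_rpow (hf.mono_set Ioc_subset_Ioi_self) hβ hbound₀)
    (integrableOn_Ioi_one_of_norm_le_rpow (hf.mono_set (Ioi_subset_Ioi zero_le_one)) hγ hbound₁)]
  exact (norm_add_le _ _).trans (add_le_add
    (norm_setIntegral_Ioc_zero_one_le_of_norm_le_rpow hβ hbound₀)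
    (norm_setIntegral_Ioi_one_le_of_norm_le_rpow hγ hbound₁))

end RpowMajorant

section Accretive

variable {A : Type*} [NormedRing A] [NormedAlgebra ℂ A]

def IsAccretive (x : A) : Prop :=
  ∀ φ : StrongDual ℂ A, ‖φ‖ = 1 → φ 1 = 1 → 0 ≤ (φ x).re

theorem exists_state_norm_mul_le [NormOneClass A] {b : A} (hb : b ≠ 0) :
    ∃ ψ : StrongDual ℂ A, ‖ψ‖ = 1 ∧ ψ 1 = 1 ∧ ∀ y, ‖b‖ * ‖ψ y‖ ≤ ‖y * b‖ := by
  obtain ⟨φ, hφ, hφb⟩ := exists_dual_vector ℂ b (norm_ne_zero_iff.2 hb)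
  have hb₀ : (‖b‖ : ℂ) ≠ 0 := by exact_mod_cast norm_ne_zero_iff.2 hb
  set ψ : StrongDual ℂ A := (‖b‖ : ℂ)⁻¹ • φ.comp ((ContinuousLinearMap.mul ℂ A).flip b)
  have hψ : ∀ y, (‖b‖ : ℂ) * ψ y = φ (y * b) := fun y => by
    simp [ψ, hb₀]
  have hψ_le : ∀ y, ‖b‖ * ‖ψ y‖ ≤ ‖y * b‖ := fun y => by
    have := φ.le_opNorm (y * b)
    rw [hφ, one_mul, ← hψ, norm_mul, Complex.norm_real, norm_norm] at this
    exact this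
  have hψ₁ : ψ 1 = 1 := by
    rw [← mul_right_inj' hb₀, hψ, one_mul, hφb, mul_one]
    rfl
  refine ⟨ψ, le_antisymm ?_ ?_, hψ₁, hψ_le⟩
  · refine ψ.opNorm_le_bound zero_le_one fun y => ?_
    have hb' : 0 < ‖b‖ := norm_pos_iff.2 hb
    have := (hψ_le y).trans (norm_mul_le y b)
    nlinarith
  · simpa [hψ₁] using ψ.le_opNorm 1

variable [NormOneClass A] {x : A}

theorem IsAccretive.mul_norm_le_norm_smul_one_add_mul (hx : IsAccretive x) (t : ℝ) (b : A) :
    t * ‖b‖ ≤ ‖(t • 1 + x) * b‖ := by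
  rcases eq_or_ne b 0 with rfl | hb
  · simp
  obtain ⟨ψ, hψ, hψ₁, hψ_le⟩ := exists_state_norm_mul_le hb
  have hre : t ≤ (ψ (t • 1 + x)).re := by simpa [hψ₁] using hx ψ hψ hψ₁
  calc t * ‖b‖ ≤ ‖ψ (t • 1 + x)‖ * ‖b‖ := by
        gcongr; exact hre.trans (Complex.re_le_norm _)
    _ ≤ ‖(t • 1 + x) * b‖ := by rw [mul_comm]; exact hψ_le _

theorem IsAccretive.norm_inverse_smul_one_add_le (hx : IsAccretive x) {t : ℝ} (ht : 0 < t) :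
    ‖Ring.inverse (t • (1 : A) + x)‖ ≤ t⁻¹ := by
  by_cases hu : IsUnit (t • (1 : A) + x)
  · have := hx.mul_norm_le_norm_smul_one_add_mul t (Ring.inverse (t • (1 : A) + x))
    rw [Ring.mul_inverse_cancel _ hu, norm_one] at this
    rw [← mul_one t⁻¹, le_inv_mul_iff₀ ht]
    exact this
  · simp [Ring.inverse_non_unit _ hu, ht.le]

theorem isUnit_smul_one_add_of_norm_lt [CompleteSpace A] {s : ℝ} (hs : ‖x‖ < s) :
    IsUnit (s • (1 : A) + x) := by
  have hs₀ : 0 < s := (norm_nonneg x).trans_lt hs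
  let u : Aˣ := Units.map (algebraMap ℝ A).toMonoidHom (Units.mk0 s hs₀.ne')
  refine ⟨u.add x ?_, ?_⟩
  · simpa [u, norm_smul, abs_of_pos hs₀] using hs
  · simp [u, Algebra.algebraMap_eq_smul_one]

theorem IsAccretive.isUnit_smul_one_add [CompleteSpace A] (hx : IsAccretive x) {t : ℝ}
    (ht : 0 < t) : IsUnit (t • (1 : A) + x) := by
  have : Nontrivial A := NormOneClass.nontrivial
  set s := ‖x‖ + t
  have hs : 0 < s := by positivity
  obtain ⟨u, hu⟩ := isUnit_smul_one_add_of_norm_lt (x := x) (s := s) (by simp [s, ht])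
  have hinv : ‖(↑u⁻¹ : A)‖ ≤ s⁻¹ := by
    simpa [← hu, Ring.inverse_unit] using hx.norm_inverse_smul_one_add_le hs
  refine ⟨u.add ((t - s) • 1) ?_, ?_⟩
  · calc ‖(t - s) • (1 : A)‖ = ‖x‖ := by simp [s]
      _ < s := by simp [s, ht]
      _ ≤ ‖(↑u⁻¹ : A)‖⁻¹ := (le_inv_comm₀ hs (Units.norm_pos _)).2 hinv
  · simp only [Units.val_add, hu, sub_smul]
    abel

end Accretive

section Resolvent

variable {A : Type*} [NormedRing A] [NormedAlgebra ℂ A] [NormOneClass A] [CompleteSpace A] {x : A}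

theorem IsAccretive.norm_inverse_smul_one_add_mul_le_two (hx : IsAccretive x) {t : ℝ}
    (ht : 0 < t) : ‖Ring.inverse (t • (1 : A) + x) * x‖ ≤ 2 := by
  have hRx : Ring.inverse (t • (1 : A) + x) * x = 1 - t • Ring.inverse (t • (1 : A) + x) := by
    have := Ring.inverse_mul_cancel _ (hx.isUnit_smul_one_add ht)
    rw [mul_add, mul_smul_comm, mul_one] at this
    exact eq_sub_of_add_eq' this
  calc ‖Ring.inverse (t • (1 : A) + x) * x‖
      ≤ ‖(1 : A)‖ + t * ‖Ring.inverse (t • (1 : A) + x)‖ := by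
        rw [hRx]
        exact (norm_sub_le _ _).trans_eq (by rw [norm_smul, Real.norm_of_nonneg ht.le])
    _ ≤ 1 + t * t⁻¹ := by
        rw [norm_one]
        gcongr
        exact hx.norm_inverse_smul_one_add_le ht
    _ = 2 := by rw [mul_inv_cancel₀ ht.ne']; norm_num

theorem IsAccretive.continuousOn_inverse_smul_one_add (hx : IsAccretive x) :
    ContinuousOn (fun t : ℝ => Ring.inverse (t • (1 : A) + x)) (Ioi 0) := by
  intro t ht
  obtain ⟨u, hu⟩ := hx.isUnit_smul_one_add ht
  have hinv := NormedRing.inverse_continuousAt u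
  rw [hu] at hinv
  have hlin : ContinuousAt (fun s : ℝ => s • (1 : A) + x) t := by fun_prop
  exact (hinv.comp (x := t) hlin).continuousWithinAt

theorem IsAccretive.norm_balPow_le (hx : IsAccretive x) {α : ℝ} (hα₀ : 0 < α) (hα₁ : α < 1) :
    ‖balPow x α‖ ≤ Real.sin (α * Real.pi) / Real.pi * (2 / α + ‖x‖ / (1 - α)) := by
  set f : ℝ → A := fun t => t ^ (α - 1) • (Ring.inverse (t • (1 : A) + x) * x)
  have hf : AEStronglyMeasurable f (volume.restrict (Ioi 0)) :=
    ((continuousOn_id.rpow_const fun t ht => .inl (ne_of_gt ht)).smul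
      (hx.continuousOn_inverse_smul_one_add.mul continuousOn_const)).aestronglyMeasurable
      measurableSet_Ioi
  have hnorm : ∀ t ∈ Ioi (0 : ℝ),
      ‖f t‖ = t ^ (α - 1) * ‖Ring.inverse (t • (1 : A) + x) * x‖ := fun t ht => by
    simp only [f, norm_smul, Real.norm_of_nonneg (Real.rpow_nonneg (le_of_lt ht) _)]
  have hsmall : ∀ t ∈ Ioc (0 : ℝ) 1, ‖f t‖ ≤ 2 * t ^ (α - 1) := fun t ht => by
    rw [hnorm t ht.1, mul_comm 2]
    exact mul_le_mul_of_nonneg_left (hx.norm_inverse_smul_one_add_mul_le_two ht.1)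
      (Real.rpow_nonneg ht.1.le _)
  have hlarge : ∀ t ∈ Ioi (1 : ℝ), ‖f t‖ ≤ ‖x‖ * t ^ (α - 2) := fun t ht => by
    have ht₀ : (0 : ℝ) < t := zero_lt_one.trans ht
    calc ‖f t‖ ≤ t ^ (α - 1) * (t⁻¹ * ‖x‖) := by
          rw [hnorm t ht₀]
          gcongr
          exact (norm_mul_le _ _).trans
            (by gcongr; exact hx.norm_inverse_smul_one_add_le ht₀)
      _ = ‖x‖ * t ^ (α - 2) := by
          rw [mul_comm ‖x‖, ← mul_assoc, ← Real.rpow_neg_one, ← Real.rpow_add ht₀]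
          congr 2
          ring
  have hint := norm_setIntegral_Ioi_zero_le_of_norm_le_rpow hf (by linarith) (by linarith)
    hsmall hlarge
  rw [show α - 1 + 1 = α by ring, show -(α - 2) - 1 = 1 - α by ring] at hint
  have hsin : 0 ≤ Real.sin (α * Real.pi) :=
    Real.sin_nonneg_of_nonneg_of_le_pi (by positivity) (by nlinarith [Real.pi_pos])
  rw [balPow, norm_smul, Real.norm_of_nonneg (by positivity)]
  gcongr

end Resolvent

theorem two_mul_sin_div_le {α : ℝ} (hα₀ : 0 < α) (hα₁ : α < 1) :
    2 * Real.sin (α * Real.pi) / (Real.pi * α * (1 - α)) ≤ 2 / (1 - α) := by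
  have hα₁' : 0 < 1 - α := by linarith
  rw [div_le_div_iff₀ (by positivity) hα₁']
  nlinarith [Real.sin_le (by positivity : 0 ≤ α * Real.pi)]

/-- If `A` is a unital Banach algebra, `x ∈ A` is accretive with
`‖x‖ ≤ 1`, and `0 < α < 1`, then `‖x^α‖ ≤ 2 sin(απ)/(π α (1−α))`; in particular
`‖x^{1/m}‖ ≤ 2m/(m−1)` for `m ≥ 2`. -/
theorem balPow_norm_le
    {A : Type*} [NormedRing A] [NormedAlgebra ℂ A] [NormOneClass A] [CompleteSpace A]
    (x : A)
    (hacc : ∀ φ : StrongDual ℂ A, ‖φ‖ = 1 → φ 1 = 1 → 0 ≤ (φ x).re)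
    (hx : ‖x‖ ≤ 1) :
    (∀ α : ℝ, 0 < α → α < 1 →
      ‖balPow x α‖ ≤ 2 * Real.sin (α * Real.pi) / (Real.pi * α * (1 - α))) ∧
    (∀ m : ℕ, 2 ≤ m → ‖balPow x (1 / (m : ℝ))‖ ≤ 2 * m / (m - 1)) := by
  have hbound : ∀ α : ℝ, 0 < α → α < 1 →
      ‖balPow x α‖ ≤ 2 * Real.sin (α * Real.pi) / (Real.pi * α * (1 - α)) := by
    intro α hα₀ hα₁
    have hα₁' : 0 < 1 - α := by linarith
    have hsin : 0 ≤ Real.sin (α * Real.pi) :=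
      Real.sin_nonneg_of_nonneg_of_le_pi (by positivity) (by nlinarith [Real.pi_pos])
    calc ‖balPow x α‖ ≤ Real.sin (α * Real.pi) / Real.pi * (2 / α + ‖x‖ / (1 - α)) :=
          IsAccretive.norm_balPow_le hacc hα₀ hα₁
      _ ≤ Real.sin (α * Real.pi) / Real.pi * (2 / (α * (1 - α))) := by
          gcongr
          rw [div_add_div _ _ hα₀.ne' hα₁'.ne', div_le_div_iff_of_pos_right (by positivity)]
          nlinarith
      _ = 2 * Real.sin (α * Real.pi) / (Real.pi * α * (1 - α)) := by
          field_simp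
  refine ⟨hbound, fun m hm => ?_⟩
  have hm' : (2 : ℝ) ≤ m := by exact_mod_cast hm
  have hα₁ : 1 / (m : ℝ) < 1 := by rw [div_lt_one (by linarith)]; linarith
  calc ‖balPow x (1 / (m : ℝ))‖ ≤ 2 / (1 - 1 / (m : ℝ)) :=
        (hbound _ (by positivity) hα₁).trans (two_mul_sin_div_le (by positivity) hα₁)
    _ = 2 * m / (m - 1) := by
        field_simp
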